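/- Let E be a simplicial commutative k-algebra whose Moore complex satisfies NE_4 = 0. Then for all x_2 ∈ NE_2 and y_3 ∈ NE_3 the following identity holds in E_3: (s_2 s_1 (d_2 x_2) − s_1 x_2) · y_3 = 0. -/

import Mathlib

/-- A simplicial commutative `k`-algebra: a family of commutative `k`-algebras
`obj n` together with face algebra homomorphisms `d n i : obj (n+1) →ₐ[k] obj n`
(representing `d_i : E_{n+1} → E_n`, `0 ≤ i ≤ n+1`) and degeneracy algebra
homomorphisms `s n i : obj n →ₐ[k] obj (n+1)` (representing
`s_i : E_n → E_{n+1}`, `0 ≤ i ≤ n`), satisfying the simplicial identities. -/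
structure SimplicialCommAlg (k : Type*) [CommRing k]
    (obj : ℕ → Type*) [∀ n, CommRing (obj n)] [∀ n, Algebra k (obj n)] where
  d : (n : ℕ) → ℕ → (obj (n + 1) →ₐ[k] obj n)
  s : (n : ℕ) → ℕ → (obj n →ₐ[k] obj (n + 1))
  dd : ∀ (n i j : ℕ), i < j → j ≤ n + 2 →
    (d n i).comp (d (n + 1) j) = (d n (j - 1)).comp (d (n + 1) i)
  ds_lt : ∀ (m i j : ℕ), i < j → j ≤ m + 1 →
    (d (m + 1) i).comp (s (m + 1) j) = (s m (j - 1)).comp (d m i)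
  ds_self : ∀ (n j : ℕ), j ≤ n → (d n j).comp (s n j) = AlgHom.id k (obj n)
  ds_succ : ∀ (n j : ℕ), j ≤ n → (d n (j + 1)).comp (s n j) = AlgHom.id k (obj n)
  ds_gt : ∀ (m i j : ℕ), j + 1 < i → i ≤ m + 2 →
    (d (m + 1) i).comp (s (m + 1) j) = (s m j).comp (d m (i - 1))
  ss : ∀ (n i j : ℕ), i ≤ j → j ≤ n →
    (s (n + 1) i).comp (s n j) = (s (n + 1) (j + 1)).comp (s n i)

/-
Multiply `s₂ s₁ x − s₃ s₁ x` by `s₃ y` in `E₄`. The faces `d₀, d₁, d₂` kill `s₃ y` because `y` lies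
in `NE₃`, and `d₃` kills the first factor because `d₃ s₂ = d₃ s₃ = id`. So the product lies in
`NE₄ = 0`, and applying `d₄` to it gives `(s₂ s₁ d₂ x − s₁ x) · y = 0`.
-/

namespace SimplicialCommAlg

variable {k : Type*} [CommRing k] {obj : ℕ → Type*} [∀ n, CommRing (obj n)]
  [∀ n, Algebra k (obj n)] (E : SimplicialCommAlg k obj)

/-- `E.moore n` is `NE_{n+1}`, since `E.d n i` is the face `d_i : E_{n+1} → E_n`. -/
def moore (n : ℕ) : Set (obj (n + 1)) :=
  {x | ∀ i ≤ n, E.d n i x = 0}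

theorem d_s_apply_of_le {m i j : ℕ} (hij : i ≤ j) (hj : j ≤ m) (x : obj (m + 1)) :
    E.d (m + 1) i (E.s (m + 1) (j + 1) x) = E.s m j (E.d m i x) :=
  AlgHom.congr_fun (E.ds_lt m i (j + 1) (by omega) (by omega)) x

theorem d_s_apply_of_lt {m i j : ℕ} (hji : j < i) (hi : i ≤ m + 1) (x : obj (m + 1)) :
    E.d (m + 1) (i + 1) (E.s (m + 1) j x) = E.s m j (E.d m i x) :=
  AlgHom.congr_fun (E.ds_gt m (i + 1) j (by omega) (by omega)) x

theorem d_s_self_apply {n j : ℕ} (hj : j ≤ n) (x : obj n) : E.d n j (E.s n j x) = x :=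
  AlgHom.congr_fun (E.ds_self n j hj) x

theorem d_succ_s_apply {n j : ℕ} (hj : j ≤ n) (x : obj n) : E.d n (j + 1) (E.s n j x) = x :=
  AlgHom.congr_fun (E.ds_succ n j hj) x

theorem d_s_last_eq_zero_of_mem_moore {n i : ℕ} {y : obj (n + 1)} (hy : y ∈ E.moore n)
    (hi : i ≤ n) : E.d (n + 1) i (E.s (n + 1) (n + 1) y) = 0 := by
  rw [E.d_s_apply_of_le hi le_rfl, hy i hi, map_zero]

theorem d_s_sub_s_succ (n : ℕ) (a : obj (n + 1)) :
    E.d (n + 1) (n + 1) (E.s (n + 1) n a - E.s (n + 1) (n + 1) a) = 0 := by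
  rw [map_sub, E.d_succ_s_apply (by omega), E.d_s_self_apply le_rfl, sub_self]

theorem d_last_s_sub_s_succ (n : ℕ) (a : obj (n + 1)) :
    E.d (n + 1) (n + 2) (E.s (n + 1) n a - E.s (n + 1) (n + 1) a) =
      E.s n n (E.d n (n + 1) a) - a := by
  rw [map_sub, E.d_s_apply_of_lt (Nat.lt_succ_self n) le_rfl, E.d_succ_s_apply le_rfl]

theorem s_d_sub_self_mul_eq_zero {n : ℕ} (hNE : ∀ w ∈ E.moore (n + 1), w = 0)
    (a : obj (n + 1)) {y : obj (n + 1)} (hy : y ∈ E.moore n) :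
    (E.s n n (E.d n (n + 1) a) - a) * y = 0 := by
  set w := (E.s (n + 1) n a - E.s (n + 1) (n + 1) a) * E.s (n + 1) (n + 1) y
  have hw : w ∈ E.moore (n + 1) := by
    intro i hi
    rcases Nat.lt_or_eq_of_le hi with hi | rfl
    · rw [map_mul, E.d_s_last_eq_zero_of_mem_moore hy (by omega), mul_zero]
    · rw [map_mul, E.d_s_sub_s_succ, zero_mul]
  have := congrArg (E.d (n + 1) (n + 2)) (hNE w hw)
  rwa [map_mul, E.d_last_s_sub_s_succ, E.d_succ_s_apply le_rfl, map_zero] at this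

end SimplicialCommAlg

open SimplicialCommAlg in
theorem stmt_13_general {k : Type*} [CommRing k] {obj : ℕ → Type*}
    [∀ n, CommRing (obj n)] [∀ n, Algebra k (obj n)]
    (E : SimplicialCommAlg k obj)
    (hNE4 : ∀ w : obj 4, E.d 3 0 w = 0 → E.d 3 1 w = 0 →
      E.d 3 2 w = 0 → E.d 3 3 w = 0 → w = 0)
    (x2 : obj 2) (y3 : obj 3) (hy3 : E.d 2 0 y3 = 0 ∧ E.d 2 1 y3 = 0 ∧ E.d 2 2 y3 = 0) :
    (E.s 2 2 (E.s 1 1 (E.d 1 2 x2)) - E.s 2 1 x2) * y3 = 0 := by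
  have hNE : ∀ w ∈ E.moore 3, w = 0 := fun w hw => hNE4 w (hw 0 (by omega)) (hw 1 (by omega))
    (hw 2 (by omega)) (hw 3 le_rfl)
  have hy : y3 ∈ E.moore 2 := by
    obtain ⟨h0, h1, h2⟩ := hy3
    intro i hi
    interval_cases i <;> assumption
  have := E.s_d_sub_self_mul_eq_zero hNE (E.s 2 1 x2) hy
  rwa [E.d_s_apply_of_lt (by omega) le_rfl] at this

theorem stmt_13 {k : Type*} [CommRing k] {obj : ℕ → Type*}
    [∀ n, CommRing (obj n)] [∀ n, Algebra k (obj n)]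
    (E : SimplicialCommAlg k obj)
    (hNE4 : ∀ w : obj 4, E.d 3 0 w = 0 → E.d 3 1 w = 0 →
      E.d 3 2 w = 0 → E.d 3 3 w = 0 → w = 0)
    (x2 : obj 2) (hx2 : E.d 1 0 x2 = 0 ∧ E.d 1 1 x2 = 0) (y3 : obj 3) (hy3 : E.d 2 0 y3 = 0 ∧ E.d 2 1 y3 = 0 ∧ E.d 2 2 y3 = 0) :
    (E.s 2 2 (E.s 1 1 (E.d 1 2 x2)) - E.s 2 1 x2) * y3 = 0 :=
  stmt_13_general E hNE4 x2 y3 hy3
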